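/- For any finite sequence A = (a_1,…,a_n) of positive integers and any m ≥ 0, in the algebra 𝓕₂* the (2^m)-th power of the basis element S_A equals the single basis element S_{(2^m a_1, 2^m a_2, …, 2^m a_n)}. -/

import Mathlib

/-- The overlapping shuffle product of two finite sequences, as a multiset
(counting multiplicities). -/
def osp : List ℕ → List ℕ → Multiset (List ℕ)
  | A, [] => {A}
  | [], B => {B}
  | a :: A, b :: B =>
      ((osp A (b :: B)).map (a :: ·)) +
      ((osp (a :: A) B).map (b :: ·)) +
      ((osp A B).map ((a + b) :: ·))
termination_by A B => A.length + B.length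
decreasing_by all_goals (simp only [List.length_cons]; omega)

/-- The underlying free module over `ZMod 2` on the set of finite sequences
(this carries the mod 2 dual Leibniz--Hopf algebra `𝓕₂*`). -/
abbrev F2D : Type := (List ℕ) →₀ ZMod 2

/-- The basis element `S_I`. -/
noncomputable def sElem (I : List ℕ) : F2D := Finsupp.single I 1

/-- The element of `𝓕₂*` associated to a multiset of sequences, keeping
multiplicities mod 2. -/
noncomputable def ofMS (m : Multiset (List ℕ)) : F2D := (m.map sElem).sum

/-- The bilinear product of `𝓕₂*`: on basis elements,
`S_I · S_J = Σ_K (multiplicity of K in osp I J mod 2) • S_K`. -/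
noncomputable def fmul (x y : F2D) : F2D :=
  x.sum fun I a => y.sum fun J b => (a * b) • ofMS (osp I J)

/-- Powers in `𝓕₂*` (with `S_{()}` the unit). -/
noncomputable def fpow (x : F2D) : ℕ → F2D
  | 0 => sElem []
  | n + 1 => fmul x (fpow x n)

/-!
The overlapping shuffle product is commutative and associative, so `𝓕₂*` is associative
and `S_A ^ (2k) = (S_A · S_A) ^ k`. In `S_A · S_A` with `A = a :: A'`, the terms beginning
with an unmerged letter `a` are `a ⌢ (A' · A)` and `a ⌢ (A · A')`, which cancel mod 2 by
commutativity; what remains is `2a ⌢ (A' · A')`, so `S_A · S_A = S_{2A}` by induction on `A`.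
Induction on `m` then gives `S_A ^ (2^m) = S_{2^m A}`.
-/

@[simp] lemma osp_nil_right (A : List ℕ) : osp A [] = {A} := by
  cases A <;> simp [osp]

@[simp] lemma osp_nil_left (B : List ℕ) : osp [] B = {B} := by
  cases B <;> simp [osp]

lemma osp_cons_cons (a b : ℕ) (A B : List ℕ) :
    osp (a :: A) (b :: B) =
      (osp A (b :: B)).map (a :: ·) + (osp (a :: A) B).map (b :: ·) +
        (osp A B).map ((a + b) :: ·) := by
  rw [osp]

lemma osp_comm (A B : List ℕ) : osp A B = osp B A := by
  match A, B with
  | A, [] => simp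
  | [], B => simp
  | a :: A, b :: B =>
    rw [osp_cons_cons, osp_cons_cons b a, osp_comm A (b :: B), osp_comm (a :: A) B,
      osp_comm A B, Nat.add_comm a b]
    abel
termination_by A.length + B.length

/- Both bracketings of a triple product of nonempty sequences satisfy the same seven-term
recursion in the first letters. -/

lemma bind_osp_left_cons (a b c : ℕ) (I J K : List ℕ) :
    (osp (a :: I) (b :: J)).bind (osp · (c :: K)) =
      ((osp I (b :: J)).bind (osp · (c :: K))).map (a :: ·) +
      ((osp (a :: I) J).bind (osp · (c :: K))).map (b :: ·) +
      ((osp (a :: I) (b :: J)).bind (osp · K)).map (c :: ·) +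
      (((osp I J).bind (osp · (c :: K))).map ((a + b) :: ·) +
      ((osp I (b :: J)).bind (osp · K)).map ((a + c) :: ·) +
      ((osp (a :: I) J).bind (osp · K)).map ((b + c) :: ·)) +
      ((osp I J).bind (osp · K)).map ((a + b + c) :: ·) := by
  simp only [osp_cons_cons, Multiset.add_bind, Multiset.bind_add, Multiset.bind_map,
    ← Multiset.map_bind, Multiset.map_add, Nat.add_assoc]
  abel

lemma bind_osp_right_cons (a b c : ℕ) (I J K : List ℕ) :
    (osp (b :: J) (c :: K)).bind (osp (a :: I) ·) =
      ((osp (b :: J) (c :: K)).bind (osp I ·)).map (a :: ·) +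
      ((osp J (c :: K)).bind (osp (a :: I) ·)).map (b :: ·) +
      ((osp (b :: J) K).bind (osp (a :: I) ·)).map (c :: ·) +
      (((osp J (c :: K)).bind (osp I ·)).map ((a + b) :: ·) +
      ((osp (b :: J) K).bind (osp I ·)).map ((a + c) :: ·) +
      ((osp J K).bind (osp (a :: I) ·)).map ((b + c) :: ·)) +
      ((osp J K).bind (osp I ·)).map ((a + b + c) :: ·) := by
  simp only [osp_cons_cons, Multiset.add_bind, Multiset.bind_add, Multiset.bind_map,
    ← Multiset.map_bind, Multiset.map_add, Nat.add_assoc]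
  abel

lemma osp_assoc (I J K : List ℕ) :
    (osp I J).bind (osp · K) = (osp J K).bind (osp I ·) := by
  have bind_singleton_self (s : Multiset (List ℕ)) : s.bind ({·}) = s :=
    (Multiset.bind_singleton s id).trans (Multiset.map_id s)
  match I, J, K with
  | I, J, [] => simp [bind_singleton_self]
  | I, [], K => simp
  | [], J, K => cases J <;> cases K <;> simp [bind_singleton_self]
  | a :: I, b :: J, c :: K =>
    rw [bind_osp_left_cons, bind_osp_right_cons,
      osp_assoc I (b :: J) (c :: K), osp_assoc (a :: I) J (c :: K), osp_assoc (a :: I) (b :: J) K,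
      osp_assoc I J (c :: K), osp_assoc I (b :: J) K, osp_assoc (a :: I) J K, osp_assoc I J K]
termination_by I.length + J.length + K.length

@[simp] lemma ofMS_add (m n : Multiset (List ℕ)) : ofMS (m + n) = ofMS m + ofMS n := by
  simp [ofMS]

@[simp] lemma ofMS_cons (I : List ℕ) (m : Multiset (List ℕ)) :
    ofMS (I ::ₘ m) = sElem I + ofMS m := by
  simp [ofMS]

@[simp] lemma ofMS_singleton (I : List ℕ) : ofMS {I} = sElem I := by
  simp [ofMS]

lemma ofMS_map (f : List ℕ → List ℕ) (m : Multiset (List ℕ)) :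
    ofMS (m.map f) = Finsupp.mapDomain f (ofMS m) := by
  induction m using Multiset.induction_on with
  | empty => simp [ofMS]
  | cons I m ih => simp [ih, sElem, Finsupp.mapDomain_add, Finsupp.mapDomain_single]

lemma fmul_sElem_sElem (I J : List ℕ) : fmul (sElem I) (sElem J) = ofMS (osp I J) := by
  simp [fmul, sElem]

@[simp] lemma fmul_zero_left (y : F2D) : fmul 0 y = 0 := by
  simp [fmul]

@[simp] lemma fmul_zero_right (x : F2D) : fmul x 0 = 0 := by
  simp [fmul]

lemma fmul_add_left (x y z : F2D) : fmul (x + y) z = fmul x z + fmul y z := by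
  unfold fmul
  refine Finsupp.sum_add_index' (by simp) fun I a b => ?_
  rw [← Finsupp.sum_add]
  exact Finsupp.sum_congr fun J _ => by rw [add_mul, add_smul]

lemma fmul_add_right (x y z : F2D) : fmul x (y + z) = fmul x y + fmul x z := by
  unfold fmul
  rw [← Finsupp.sum_add]
  exact Finsupp.sum_congr fun I _ =>
    Finsupp.sum_add_index' (by simp) fun J b c => by rw [mul_add, add_smul]

lemma fmul_sElem_ofMS (I : List ℕ) (m : Multiset (List ℕ)) :
    fmul (sElem I) (ofMS m) = ofMS (m.bind (osp I ·)) := by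
  induction m using Multiset.induction_on with
  | empty => simp [ofMS]
  | cons J m ih =>
    rw [ofMS_cons, fmul_add_right, fmul_sElem_sElem, ih, Multiset.cons_bind, ofMS_add]

lemma fmul_ofMS_sElem (m : Multiset (List ℕ)) (K : List ℕ) :
    fmul (ofMS m) (sElem K) = ofMS (m.bind (osp · K)) := by
  induction m using Multiset.induction_on with
  | empty => simp [ofMS]
  | cons J m ih =>
    rw [ofMS_cons, fmul_add_left, fmul_sElem_sElem, ih, Multiset.cons_bind, ofMS_add]

lemma fmul_sElem_sElem_assoc (I J : List ℕ) (z : F2D) :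
    fmul (sElem I) (fmul (sElem J) z) = fmul (fmul (sElem I) (sElem J)) z := by
  induction z using Finsupp.induction with
  | zero => simp
  | single_add K c z _ hc ih =>
    have single_eq : Finsupp.single K c = sElem K := by
      fin_cases c; exacts [absurd rfl hc, rfl]
    rw [fmul_add_right, fmul_add_right, fmul_add_right, ih, single_eq]
    congr 1
    rw [fmul_sElem_sElem J K, fmul_sElem_ofMS, fmul_sElem_sElem, fmul_ofMS_sElem, osp_assoc]

lemma fmul_sElem_self (A : List ℕ) :
    fmul (sElem A) (sElem A) = sElem (A.map (2 * ·)) := by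
  induction A with
  | nil => simp [fmul_sElem_sElem]
  | cons a A ih =>
    rw [fmul_sElem_sElem, osp_cons_cons, osp_comm A (a :: A), ofMS_add, ofMS_add,
      ZModModule.add_self, zero_add, ofMS_map, ← fmul_sElem_sElem, ih]
    simp [sElem, Finsupp.mapDomain_single, two_mul]

lemma fpow_sElem_two_mul (I : List ℕ) (k : ℕ) :
    fpow (sElem I) (2 * k) = fpow (fmul (sElem I) (sElem I)) k := by
  induction k with
  | zero => rfl
  | succ k ih => rw [Nat.mul_succ, fpow, fpow, fmul_sElem_sElem_assoc, ih, fpow]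

theorem sElem_pow_two_pow_general (A : List ℕ) (m : ℕ) :
    fpow (sElem A) (2 ^ m) = sElem (A.map (fun a => 2 ^ m * a)) := by
  induction m generalizing A with
  | zero => simp [fpow, fmul_sElem_sElem]
  | succ m ih =>
    rw [pow_succ', fpow_sElem_two_mul, fmul_sElem_self, ih, List.map_map]
    congr 2
    funext a
    exact (Nat.mul_left_comm _ _ _).trans (Nat.mul_assoc _ _ _).symm

/-- For a sequence `A = (a_1,…,a_n)` of positive integers and `m ≥ 0`, in
`𝓕₂*` one has `S_A ^ (2^m) = S_{(2^m a_1,…,2^m a_n)}`. -/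
theorem sElem_pow_two_pow (A : List ℕ) (hA : ∀ a ∈ A, 0 < a) (m : ℕ) :
    fpow (sElem A) (2 ^ m) = sElem (A.map (fun a => 2 ^ m * a)) :=
  sElem_pow_two_pow_general A m
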